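/- arXiv:2504.00570 — 3 statements merged into one kernel-verified Lean document; each statement's English description precedes it below -/
import Mathlib

section
/- Let a, b be real constants with a² + b > 0 and let f(u) = √(-u² + 2au + b) on the interval I = (a - √(a²+b), a + √(a²+b)). Then f is positive on I and satisfies 1 + f'(u)² + f(u)·f''(u) = 0 for all u ∈ I. -/
/-!
On `I` the radicand `g u = -u² + 2au + b = (a² + b) - (u - a)²` is positive, so `f = √g` is
positive and smooth there, with `f² = g`. Differentiating `f²` twice gives
`(f²)'' = 2 (f'² + f f'')`, while `g'' = -2`; hence `1 + f'² + f f'' = 0`.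
-/

open Filter Set Topology

theorem deriv_deriv_sq {f : ℝ → ℝ} {s : Set ℝ} {u : ℝ} (hs : IsOpen s) (hf : ContDiffOn ℝ 2 f s)
    (hu : u ∈ s) :
    deriv (deriv fun v => f v ^ 2) u = 2 * (deriv f u ^ 2 + f u * deriv (deriv f) u) := by
  have hdf : ∀ v ∈ s, DifferentiableAt ℝ f v := fun v hv =>
    (hf.differentiableOn two_ne_zero).differentiableAt (hs.mem_nhds hv)
  have hddf : DifferentiableAt ℝ (deriv f) u :=
    ((hf.deriv_of_isOpen hs (m := 1) le_rfl).differentiableOn one_ne_zero).differentiableAt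
      (hs.mem_nhds hu)
  have hderiv_sq : deriv (fun v => f v ^ 2) =ᶠ[𝓝 u] fun v => 2 * f v * deriv f v := by
    filter_upwards [hs.mem_nhds hu] with v hv
    simp [hdf v hv]
  rw [hderiv_sq.deriv_eq]
  simp only [differentiableAt_const, hdf u hu, DifferentiableAt.fun_mul, hddf, deriv_fun_mul,
    deriv_const', zero_mul, zero_add]
  ring

theorem neg_sq_add_two_mul_add_pos {a b u : ℝ}
    (hu : u ∈ Ioo (a - √(a ^ 2 + b)) (a + √(a ^ 2 + b))) : 0 < -u ^ 2 + 2 * a * u + b := by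
  have hdist : |u - a| < √(a ^ 2 + b) :=
    abs_sub_lt_iff.2 ⟨by linarith [hu.2], by linarith [hu.1]⟩
  have hdist_sq := (Real.lt_sqrt (abs_nonneg _)).1 hdist
  rw [sq_abs] at hdist_sq
  linarith

theorem deriv_deriv_neg_sq_add_two_mul_add (a b u : ℝ) :
    deriv (deriv fun v : ℝ => -v ^ 2 + 2 * a * v + b) u = -2 := by
  have hderiv : deriv (fun v : ℝ => -v ^ 2 + 2 * a * v + b) = fun v => 2 * a - 2 * v := by
    funext v
    exact (((hasDerivAt_pow 2 v).neg.add ((hasDerivAt_id v).const_mul (2 * a))).add_const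
      b).deriv.trans (by ring)
  rw [hderiv]
  simp

theorem stmt5_general (a b : ℝ) :
    let f : ℝ → ℝ := fun u => Real.sqrt (-u ^ 2 + 2 * a * u + b)
    let I : Set ℝ := Set.Ioo (a - Real.sqrt (a ^ 2 + b)) (a + Real.sqrt (a ^ 2 + b))
    (∀ u ∈ I, 0 < f u) ∧
    (∀ u ∈ I, 1 + (deriv f u) ^ 2 + f u * deriv (deriv f) u = 0) := by
  intro f I
  have hg : ∀ u ∈ I, 0 < -u ^ 2 + 2 * a * u + b := fun u hu => neg_sq_add_two_mul_add_pos hu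
  have hf : ContDiffOn ℝ 2 f I :=
    (by fun_prop : ContDiff ℝ 2 fun u : ℝ => -u ^ 2 + 2 * a * u + b).contDiffOn.sqrt
      fun u hu => (hg u hu).ne'
  refine ⟨fun u hu => Real.sqrt_pos.2 (hg u hu), fun u hu => ?_⟩
  have hf_sq : (fun v => f v ^ 2) =ᶠ[𝓝 u] fun v => -v ^ 2 + 2 * a * v + b := by
    filter_upwards [isOpen_Ioo.mem_nhds hu] with v hv
    exact Real.sq_sqrt (hg v hv).le
  have h := deriv_deriv_sq isOpen_Ioo hf hu
  rw [hf_sq.deriv.deriv_eq, deriv_deriv_neg_sq_add_two_mul_add] at h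
  linarith

theorem stmt5 (a b : ℝ) (hab : 0 < a ^ 2 + b) :
    let f : ℝ → ℝ := fun u => Real.sqrt (-u ^ 2 + 2 * a * u + b)
    let I : Set ℝ := Set.Ioo (a - Real.sqrt (a ^ 2 + b)) (a + Real.sqrt (a ^ 2 + b))
    (∀ u ∈ I, 0 < f u) ∧
    (∀ u ∈ I, 1 + (deriv f u) ^ 2 + f u * deriv (deriv f) u = 0) :=
  stmt5_general a b
end

section
/- Let f be a positive twice differentiable function on an interval I satisfying 1 + f'(u)² + f(u)·f''(u) = 0 for all u ∈ I. Then there exist constants a, b such that f(u)² = -u² + 2au + b for all u ∈ I. -/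
/-! Put `h = f f' + u`. The equation says exactly `h' = 1 + f'² + f f'' = 0`, so `h` is a
constant `a` on the interval, and then `(f² + u²)' = 2h = 2a` makes `f² + u²` affine. -/

theorem Convex.sub_eq_mul_sub_of_hasDerivAt {g : ℝ → ℝ} {s : Set ℝ} {c : ℝ} (hs : Convex ℝ s)
    (hg : ∀ x ∈ s, HasDerivAt g c x) {x y : ℝ} (hx : x ∈ s) (hy : y ∈ s) :
    g y - g x = c * (y - x) := by
  have := hs.norm_image_sub_le_of_norm_hasDerivWithin_le
    (fun z hz => ((hg z hz).sub ((hasDerivAt_id' z).const_mul c)).hasDerivWithinAt)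
    (fun _ _ => by rw [mul_one, sub_self, norm_zero]) hx hy
  rw [zero_mul, norm_le_zero_iff, Pi.sub_apply, Pi.sub_apply] at this
  linarith

theorem hasDerivAt_mul_deriv_add_id_of_ode {f : ℝ → ℝ} {u : ℝ} (hf : DifferentiableAt ℝ f u)
    (hf' : DifferentiableAt ℝ (deriv f) u)
    (hode : 1 + deriv f u ^ 2 + f u * deriv (deriv f) u = 0) :
    HasDerivAt (fun x => f x * deriv f x + x) 0 u := by
  refine ((hf.hasDerivAt.mul hf'.hasDerivAt).add (hasDerivAt_id' u)).congr_deriv ?_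
  linear_combination hode

theorem hasDerivAt_sq_add_sq {f : ℝ → ℝ} {u : ℝ} (hf : DifferentiableAt ℝ f u) :
    HasDerivAt (fun x => f x ^ 2 + x ^ 2) (2 * (f u * deriv f u + u)) u := by
  refine ((hf.hasDerivAt.pow 2).add ((hasDerivAt_id' u).pow 2)).congr_deriv ?_
  ring

theorem stmt6_general (f : ℝ → ℝ) (I : Set ℝ) (hI' : I.OrdConnected)
    (hf : ∀ u ∈ I, DifferentiableAt ℝ f u)
    (hf' : ∀ u ∈ I, DifferentiableAt ℝ (deriv f) u)
    (hode : ∀ u ∈ I, 1 + (deriv f u) ^ 2 + f u * deriv (deriv f) u = 0) :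
    ∃ a b : ℝ, ∀ u ∈ I, (f u) ^ 2 = -u ^ 2 + 2 * a * u + b := by
  rcases I.eq_empty_or_nonempty with rfl | ⟨x₀, hx₀⟩
  · exact ⟨0, 0, by simp⟩
  have hconv : Convex ℝ I := hI'.convex
  set a := f x₀ * deriv f x₀ + x₀
  have h_const : ∀ u ∈ I, f u * deriv f u + u = a := fun u hu => by
    have := hconv.sub_eq_mul_sub_of_hasDerivAt
      (fun x hx => hasDerivAt_mul_deriv_add_id_of_ode (hf x hx) (hf' x hx) (hode x hx)) hx₀ hu
    linarith
  have h_affine : ∀ u ∈ I, HasDerivAt (fun x => f x ^ 2 + x ^ 2) (2 * a) u := fun u hu => by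
    simpa only [h_const u hu] using hasDerivAt_sq_add_sq (hf u hu)
  refine ⟨a, f x₀ ^ 2 + x₀ ^ 2 - 2 * a * x₀, fun u hu => ?_⟩
  have := hconv.sub_eq_mul_sub_of_hasDerivAt h_affine hx₀ hu
  linarith

theorem stmt6 (f : ℝ → ℝ) (I : Set ℝ) (hI : IsOpen I) (hI' : I.OrdConnected)
    (hpos : ∀ u ∈ I, 0 < f u)
    (hf : ∀ u ∈ I, DifferentiableAt ℝ f u)
    (hf' : ∀ u ∈ I, DifferentiableAt ℝ (deriv f) u)
    (hode : ∀ u ∈ I, 1 + (deriv f u) ^ 2 + f u * deriv (deriv f) u = 0) :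
    ∃ a b : ℝ, ∀ u ∈ I, (f u) ^ 2 = -u ^ 2 + 2 * a * u + b :=
  stmt6_general f I hI' hf hf' hode
end

section
/- Let a, b be constants with a² + b > 0 and f(u) = √(-u² + 2au + b). If g satisfies g'(u) = √(f'(u)² + 1) on I = (a - √(a²+b), a + √(a²+b)), then g(u) = √(a²+b)·arcsin((u-a)/√(a²+b)) + c for some constant c, for all u ∈ I. -/
/-!
Since $-u^2 + 2au + b = r^2 - (u - a)^2$ with $r = \sqrt{a^2 + b}$, the graph of
$f$ is the upper half of the circle of radius $r$ about $(a, 0)$, so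
$f'(u)^2 + 1 = r^2 / (r^2 - (u - a)^2)$. The square root of this is also the derivative of
$r \arcsin((u - a)/r)$, and two functions with the same derivative on an interval differ by a
constant.
-/

open Real Set

section Semicircle

variable {c r u : ℝ}

lemma sq_sub_lt_sq_of_mem_Ioo (hu : u ∈ Ioo (c - r) (c + r)) : (u - c) ^ 2 < r ^ 2 :=
  sq_lt_sq' (by linarith [hu.1]) (by linarith [hu.2])

lemma hasDerivAt_sqrt_sq_sub_sq (h : (u - c) ^ 2 < r ^ 2) :
    HasDerivAt (fun u => √(r ^ 2 - (u - c) ^ 2)) (-(u - c) / √(r ^ 2 - (u - c) ^ 2)) u := by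
  have hpos : 0 < r ^ 2 - (u - c) ^ 2 := sub_pos.mpr h
  have hinner : HasDerivAt (fun u => r ^ 2 - (u - c) ^ 2) (-(2 * (u - c))) u := by
    simpa using (((hasDerivAt_id u).sub_const c).pow 2).const_sub (r ^ 2)
  convert hinner.sqrt hpos.ne' using 1
  field_simp

lemma sqrt_deriv_sqrt_sq_sub_sq_sq_add_one (hr : 0 < r) (h : (u - c) ^ 2 < r ^ 2) :
    √((deriv (fun u => √(r ^ 2 - (u - c) ^ 2)) u) ^ 2 + 1) = r / √(r ^ 2 - (u - c) ^ 2) := by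
  have hpos : 0 < r ^ 2 - (u - c) ^ 2 := sub_pos.mpr h
  have hsq : (-(u - c) / √(r ^ 2 - (u - c) ^ 2)) ^ 2 + 1 = r ^ 2 / (r ^ 2 - (u - c) ^ 2) := by
    rw [div_pow, sq_sqrt hpos.le, neg_sq]
    field_simp
    ring
  rw [(hasDerivAt_sqrt_sq_sub_sq h).deriv, hsq, sqrt_div' _ hpos.le, sqrt_sq hr.le]

lemma hasDerivAt_mul_arcsin_sub_div (hr : 0 < r) (h : (u - c) ^ 2 < r ^ 2) :
    HasDerivAt (fun u => r * arcsin ((u - c) / r)) (r / √(r ^ 2 - (u - c) ^ 2)) u := by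
  have habs : |(u - c) / r| < 1 := by
    rw [abs_div, abs_of_pos hr, div_lt_one hr]
    exact abs_lt_of_sq_lt_sq h hr.le
  have hinner : HasDerivAt (fun u => (u - c) / r) (1 / r) u := by
    simpa using ((hasDerivAt_id u).sub_const c).div_const r
  have harcsin := ((hasDerivAt_arcsin (abs_lt.mp habs).1.ne' (abs_lt.mp habs).2.ne).comp u
    hinner).const_mul r
  refine harcsin.congr_deriv ?_
  have hrad : 1 - ((u - c) / r) ^ 2 = (r ^ 2 - (u - c) ^ 2) / r ^ 2 := by
    field_simp
  rw [hrad, sqrt_div' _ (sq_nonneg r), sqrt_sq hr.le]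
  field_simp

end Semicircle

theorem stmt7 (a b : ℝ) (hab : 0 < a ^ 2 + b) (g : ℝ → ℝ)
    (hg : ∀ u ∈ Set.Ioo (a - Real.sqrt (a ^ 2 + b)) (a + Real.sqrt (a ^ 2 + b)),
      HasDerivAt g
        (Real.sqrt ((deriv (fun u : ℝ => Real.sqrt (-u ^ 2 + 2 * a * u + b)) u) ^ 2 + 1)) u) :
    ∃ c : ℝ, ∀ u ∈ Set.Ioo (a - Real.sqrt (a ^ 2 + b)) (a + Real.sqrt (a ^ 2 + b)),
      g u = Real.sqrt (a ^ 2 + b) * Real.arcsin ((u - a) / Real.sqrt (a ^ 2 + b)) + c := by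
  set r := √(a ^ 2 + b)
  have hr : 0 < r := sqrt_pos.mpr hab
  have hf : (fun u : ℝ => √(-u ^ 2 + 2 * a * u + b)) = fun u => √(r ^ 2 - (u - a) ^ 2) := by
    funext u
    rw [sq_sqrt hab.le]
    ring_nf
  have hF (u) (hu : u ∈ Ioo (a - r) (a + r)) :
      HasDerivAt (fun u => r * arcsin ((u - a) / r)) (r / √(r ^ 2 - (u - a) ^ 2)) u :=
    hasDerivAt_mul_arcsin_sub_div hr (sq_sub_lt_sq_of_mem_Ioo hu)
  have hg' (u) (hu : u ∈ Ioo (a - r) (a + r)) : HasDerivAt g (r / √(r ^ 2 - (u - a) ^ 2)) u := by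
    simpa only [hf, sqrt_deriv_sqrt_sq_sub_sq_sq_add_one hr (sq_sub_lt_sq_of_mem_Ioo hu)]
      using hg u hu
  exact isOpen_Ioo.exists_eq_add_of_deriv_eq isPreconnected_Ioo
    (fun u hu => (hg' u hu).differentiableAt.differentiableWithinAt)
    (fun u hu => (hF u hu).differentiableAt.differentiableWithinAt)
    (fun u hu => (hg' u hu).deriv.trans (hF u hu).deriv.symm)
end
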